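/- arXiv:1708.08269 — 2 statements merged into one kernel-verified Lean document; each statement's English description precedes it below -/
import Mathlib

section
/- Let φ : ℂ → ℝ be a Borel measurable radial function on the unit disc, i.e. φ(z) = φ(z') whenever |z| = |z'| < 1. Let f : ℂ → ℂ be holomorphic on the open unit disc Δ = {z : |z| < 1}. Then, as an inequality of Lebesgue integrals with values in [0,+∞], |f(0)|² · ∫_{Δ} e^{-φ(z)} dλ(z) ≤ ∫_{Δ} |f(z)|² e^{-φ(z)} dλ(z). In particular, when f(0) = 1, the constant function 1 has the smallest weighted L²-norm among all holomorphic extensions of the value 1 at the origin. -/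
/-!
In polar coordinates, a radial weight `e^{-φ}` is constant on each circle `|z| = r`, so both
sides become integrals over `r ∈ (0, 1)` of `r e^{-φ(r)}` times an integral over the circle of
radius `r`. On each such circle, the mean value property applied to `f ^ 2` gives
`2π |f(0)|² ≤ ∫ |f(r e^{iθ})|² dθ`.
-/

open MeasureTheory Set Real
open scoped ENNReal

theorem Complex.polarCoord_symm_eq_circleMap (p : ℝ × ℝ) :
    Complex.polarCoord.symm p = circleMap 0 p.1 p.2 := by
  rw [Complex.polarCoord_symm_apply, circleMap_zero, Complex.exp_mul_I]
  push_cast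
  ring

theorem measurable_circleMap_uncurry (c : ℂ) :
    Measurable fun p : ℝ × ℝ => circleMap c p.1 p.2 := by
  unfold circleMap; fun_prop

theorem Complex.lintegral_ball_zero_eq_lintegral_circleMap {g : ℂ → ℝ≥0∞} (hg : Measurable g)
    (R : ℝ) :
    ∫⁻ z in Metric.ball 0 R, g z =
      ∫⁻ r in Ioo 0 R, ENNReal.ofReal r * ∫⁻ θ in Ioo (-π) π, g (circleMap 0 r θ) := by
  set S := {p : ℝ × ℝ | |p.1| < R}
  have hS : MeasurableSet S := measurableSet_lt (by fun_prop) measurable_const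
  have hpre : S ∩ polarCoord.target = Ioo 0 R ×ˢ Ioo (-π) π := by
    ext ⟨r, θ⟩
    simp only [S, polarCoord_target, mem_inter_iff, mem_prod, mem_ofPred_eq, mem_Ioi, mem_Ioo]
    constructor
    · rintro ⟨hrR, hr, hθ⟩
      exact ⟨⟨hr, (abs_of_pos hr) ▸ hrR⟩, hθ⟩
    · rintro ⟨⟨hr, hrR⟩, hθ⟩
      exact ⟨(abs_of_pos hr).symm ▸ hrR, hr, hθ⟩
  have hind (p : ℝ × ℝ) :
      ENNReal.ofReal p.1 • (Metric.ball 0 R).indicator g (Complex.polarCoord.symm p) =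
        S.indicator (fun p => ENNReal.ofReal p.1 * g (circleMap 0 p.1 p.2)) p := by
    have hmem : Complex.polarCoord.symm p ∈ Metric.ball 0 R ↔ p ∈ S := by
      rw [mem_ball_zero_iff, Complex.norm_polarCoord_symm]; rfl
    by_cases hp : p ∈ S
    · rw [indicator_of_mem hp, indicator_of_mem (hmem.mpr hp),
        Complex.polarCoord_symm_eq_circleMap, smul_eq_mul]
    · rw [indicator_of_notMem hp, indicator_of_notMem (mt hmem.mp hp), smul_zero]
  have hmeas : Measurable fun p : ℝ × ℝ => ENNReal.ofReal p.1 * g (circleMap 0 p.1 p.2) :=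
    measurable_fst.ennreal_ofReal.mul (hg.comp (measurable_circleMap_uncurry 0))
  rw [← lintegral_indicator measurableSet_ball, ← Complex.lintegral_comp_polarCoord_symm]
  simp_rw [hind]
  rw [lintegral_indicator hS, Measure.restrict_restrict hS, hpre, Measure.volume_eq_prod,
    setLIntegral_prod _ hmeas.aemeasurable]
  refine setLIntegral_congr_fun measurableSet_Ioo fun r _ => ?_
  exact lintegral_const_mul (ENNReal.ofReal r) (hg.comp (measurable_circleMap 0 r))

theorem lintegral_ball_mul_le_of_radial {w g h : ℂ → ℝ≥0∞} {R : ℝ} (hw : Measurable w)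
    (hg : Measurable g) (hh : Measurable h)
    (hw_rad : ∀ z z' : ℂ, ‖z‖ = ‖z'‖ → ‖z‖ < R → w z = w z')
    (hgh : ∀ r ∈ Ioo 0 R, ∫⁻ θ in Ioo (-π) π, g (circleMap 0 r θ) ≤
      ∫⁻ θ in Ioo (-π) π, h (circleMap 0 r θ)) :
    ∫⁻ z in Metric.ball 0 R, g z * w z ≤ ∫⁻ z in Metric.ball 0 R, h z * w z := by
  have hw_circle (k : ℂ → ℝ≥0∞) (hk : Measurable k) {r : ℝ} (hr : r ∈ Ioo 0 R) :
      ∫⁻ θ in Ioo (-π) π, k (circleMap 0 r θ) * w (circleMap 0 r θ) =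
        (∫⁻ θ in Ioo (-π) π, k (circleMap 0 r θ)) * w r := by
    have hnorm (θ : ℝ) : ‖circleMap 0 r θ‖ = ‖(r : ℂ)‖ := by
      rw [norm_circleMap_zero, Complex.norm_real, Real.norm_eq_abs]
    have hw_r (θ : ℝ) : w (circleMap 0 r θ) = w r := hw_rad _ _ (hnorm θ) <| by
      rw [hnorm, Complex.norm_real, norm_of_nonneg hr.1.le]; exact hr.2
    simp_rw [hw_r]
    exact lintegral_mul_const _ (hk.comp (measurable_circleMap 0 r))
  rw [Complex.lintegral_ball_zero_eq_lintegral_circleMap (g := fun z => g z * w z) (hg.mul hw),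
    Complex.lintegral_ball_zero_eq_lintegral_circleMap (g := fun z => h z * w z) (hh.mul hw)]
  refine setLIntegral_mono' measurableSet_Ioo fun r hr => ?_
  rw [hw_circle g hg hr, hw_circle h hh hr]
  gcongr _ * (?_ * _)
  exact hgh r hr

theorem Real.norm_circleAverage_le {E : Type*} [NormedAddCommGroup E] [NormedSpace ℝ E]
    (f : ℂ → E) (c : ℂ) (R : ℝ) :
    ‖circleAverage f c R‖ ≤ circleAverage (fun z => ‖f z‖) c R := by
  rw [circleAverage_def, circleAverage_def, norm_smul, smul_eq_mul,
    Real.norm_of_nonneg (by positivity)]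
  gcongr
  exact intervalIntegral.norm_integral_le_integral_norm (by positivity)

theorem DiffContOnCl.norm_pow_le_circleAverage {f : ℂ → ℂ} {c : ℂ} {R : ℝ}
    (hf : DiffContOnCl ℂ f (Metric.ball c |R|)) (n : ℕ) :
    ‖f c‖ ^ n ≤ Real.circleAverage (fun z => ‖f z‖ ^ n) c R := by
  have hf_pow : DiffContOnCl ℂ (fun z => f z ^ n) (Metric.ball c |R|) :=
    ⟨hf.differentiableOn.pow n, hf.continuousOn.pow n⟩
  calc ‖f c‖ ^ n = ‖Real.circleAverage (fun z => f z ^ n) c R‖ := by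
        rw [hf_pow.circleAverage, norm_pow]
    _ ≤ Real.circleAverage (fun z => ‖f z‖ ^ n) c R := by
      simpa only [norm_pow] using norm_circleAverage_le (fun z => f z ^ n) c R

theorem lintegral_Ioo_circleMap_eq_ofReal_circleAverage {h : ℂ → ℝ} {c : ℂ} {R : ℝ}
    (hh : ContinuousOn h (Metric.sphere c |R|)) (h_nonneg : ∀ z ∈ Metric.sphere c |R|, 0 ≤ h z) :
    ∫⁻ θ in Ioo (-π) π, ENNReal.ofReal (h (circleMap c R θ)) =
      ENNReal.ofReal (2 * π * circleAverage h c R) := by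
  have hcont : Continuous fun θ => h (circleMap c R θ) :=
    hh.comp_continuous (continuous_circleMap c R) (circleMap_mem_sphere' c R)
  have hper : Function.Periodic (fun θ => h (circleMap c R θ)) (2 * π) :=
    fun θ => by simp [periodic_circleMap c R θ]
  have hshift := hper.intervalIntegral_add_eq (-π) 0
  rw [circleAverage_def, smul_eq_mul, ← mul_assoc, mul_inv_cancel₀ (by positivity), one_mul,
    ← zero_add (2 * π), ← hshift, show -π + 2 * π = π by ring,
    intervalIntegral.integral_of_le (by linarith [pi_pos]), integral_Ioc_eq_integral_Ioo,
    ofReal_integral_eq_lintegral_ofReal (hcont.integrableOn_Icc.mono_set Ioo_subset_Icc_self)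
      (Filter.Eventually.of_forall fun θ => h_nonneg _ (circleMap_mem_sphere' c R θ))]

theorem DiffContOnCl.ofReal_two_pi_mul_norm_pow_le_lintegral_circleMap {f : ℂ → ℂ} {c : ℂ} {R : ℝ}
    (hf : DiffContOnCl ℂ f (Metric.ball c |R|)) (n : ℕ) :
    ENNReal.ofReal (2 * π) * ENNReal.ofReal (‖f c‖ ^ n) ≤
      ∫⁻ θ in Ioo (-π) π, ENNReal.ofReal (‖f (circleMap c R θ)‖ ^ n) := by
  have hcont : ContinuousOn (fun z => ‖f z‖ ^ n) (Metric.sphere c |R|) :=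
    (hf.continuousOn_ball.mono Metric.sphere_subset_closedBall).norm.pow n
  rw [lintegral_Ioo_circleMap_eq_ofReal_circleAverage hcont fun z _ => by positivity,
    ← ENNReal.ofReal_mul (by positivity)]
  gcongr
  exact hf.norm_pow_le_circleAverage n

/-- For a Borel measurable radial weight `φ` on the unit disc and
`f` holomorphic on the unit disc,
`|f(0)|² ∫_Δ e^{-φ} dλ ≤ ∫_Δ |f|² e^{-φ} dλ` in `[0,∞]`. -/
theorem mean_value_radial_weight
    (φ : ℂ → ℝ) (hφ : Measurable φ)
    (hrad : ∀ z z' : ℂ, ‖z‖ = ‖z'‖ → ‖z‖ < 1 →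
      φ z = φ z')
    (f : ℂ → ℂ) (hf : ∀ z ∈ Metric.ball (0 : ℂ) 1, DifferentiableAt ℂ f z) :
    ENNReal.ofReal (‖f 0‖ ^ 2) *
        ∫⁻ z in Metric.ball (0 : ℂ) 1, ENNReal.ofReal (Real.exp (-φ z))
      ≤ ∫⁻ z in Metric.ball (0 : ℂ) 1,
          ENNReal.ofReal (‖f z‖ ^ 2 * Real.exp (-φ z)) := by
  classical
  set w : ℂ → ℝ≥0∞ := fun z => ENNReal.ofReal (Real.exp (-φ z))
  have hw : Measurable w := hφ.neg.exp.ennreal_ofReal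
  have hf_diff : DifferentiableOn ℂ f (Metric.ball 0 1) := fun z hz =>
    (hf z hz).differentiableWithinAt
  -- `f` is only controlled on the disc, so Tonelli is applied to a Borel function agreeing with it
  obtain ⟨F, hF, hFf⟩ : ∃ F : ℂ → ℂ, Measurable F ∧ EqOn F f (Metric.ball 0 1) :=
    ⟨_, hf_diff.continuousOn.measurable_piecewise continuous_zero.continuousOn
      measurableSet_ball, piecewise_eqOn _ _ _⟩
  have hcircle : ∀ r ∈ Ioo (0 : ℝ) 1, ∫⁻ _ in Ioo (-π) π, ENNReal.ofReal (‖f 0‖ ^ 2) ≤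
      ∫⁻ θ in Ioo (-π) π, ENNReal.ofReal (‖F (circleMap 0 r θ)‖ ^ 2) := by
    intro r hr
    have hr_abs : |r| < 1 := by rw [abs_of_pos hr.1]; exact hr.2
    have hr_ball (θ : ℝ) : circleMap 0 r θ ∈ Metric.ball 0 1 := by
      rwa [mem_ball_zero_iff, norm_circleMap_zero]
    rw [setLIntegral_const, Real.volume_Ioo, sub_neg_eq_add, ← two_mul, mul_comm]
    simp_rw [hFf (hr_ball _)]
    have hf_r : DiffContOnCl ℂ f (Metric.ball 0 |r|) :=
      hf_diff.diffContOnCl_ball (Metric.closedBall_subset_ball hr_abs)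
    exact hf_r.ofReal_two_pi_mul_norm_pow_le_lintegral_circleMap 2
  calc ENNReal.ofReal (‖f 0‖ ^ 2) * (∫⁻ z in Metric.ball (0 : ℂ) 1, w z)
      = ∫⁻ z in Metric.ball 0 1, ENNReal.ofReal (‖f 0‖ ^ 2) * w z :=
        (lintegral_const_mul _ hw).symm
    _ ≤ ∫⁻ z in Metric.ball 0 1, ENNReal.ofReal (‖F z‖ ^ 2) * w z :=
        lintegral_ball_mul_le_of_radial hw measurable_const (hF.norm.pow_const 2).ennreal_ofReal
          (fun z z' hzz' hz => by simp only [w, hrad z z' hzz' hz]) hcircle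
    _ = ∫⁻ z in Metric.ball 0 1, ENNReal.ofReal (‖f z‖ ^ 2 * Real.exp (-φ z)) :=
        setLIntegral_congr_fun measurableSet_ball fun z hz => by
          rw [hFf hz, ENNReal.ofReal_mul (by positivity)]
end

section
/- Let Ω ⊆ ℂ be an open set and let φ : Ω → ℝ be upper semicontinuous. Define the Hartogs domain Ω̃ = {(z,w) ∈ ℂ² : z ∈ Ω, |w|² < e^{-φ(z)}}, which is an open subset of ℂ². Let F : ℂ² → ℂ be holomorphic on Ω̃. Then, as an inequality of Lebesgue integrals with values in [0,+∞], π · ∫_{Ω} |F(z,0)|² e^{-φ(z)} dλ(z) ≤ ∫_{Ω̃} |F(z,w)|² dλ(z,w), where λ denotes Lebesgue measure on ℂ and on ℂ² respectively. -/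
/-!
Over `z ∈ Ω` the fibre of `Ω̃` is the disc of radius `r = e^{-φ(z)/2}`, on which `F(z, ·)` is
holomorphic. The mean value property for `F(z, ·)²` bounds `|F(z, 0)|²` by the average of
`|F(z, ·)|²` over every circle `|w| = s < r`; integrating against `s ds` in polar coordinates gives
`π r² |F(z, 0)|² ≤ ∫_{|w| < r} |F(z, w)|²`, where `π r² = π e^{-φ(z)}`. Integrating over `Ω` and
using Tonelli on the open, hence measurable, set `Ω̃` gives the claim.
-/

open MeasureTheory Set Real
open Metric Filter Topology

theorem norm_sq_le_circleAverage_norm_sq {f : ℂ → ℂ} {c : ℂ} {R : ℝ}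
    (hf : DiffContOnCl ℂ f (ball c |R|)) :
    ‖f c‖ ^ 2 ≤ circleAverage (fun z ↦ ‖f z‖ ^ 2) c R := by
  have hmean : circleAverage (fun z ↦ f z ^ 2) c R = f c ^ 2 :=
    DiffContOnCl.circleAverage ⟨hf.1.pow 2, hf.2.pow 2⟩
  calc ‖f c‖ ^ 2 = ‖circleAverage (fun z ↦ f z ^ 2) c R‖ := by rw [hmean, norm_pow]
    _ ≤ circleAverage (fun z ↦ ‖f z‖ ^ 2) c R := by
        simp only [circleAverage_def, norm_smul, norm_inv, smul_eq_mul,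
          Real.norm_of_nonneg two_pi_pos.le]
        gcongr
        refine (intervalIntegral.norm_integral_le_integral_norm two_pi_pos.le).trans_eq ?_
        simp only [norm_pow]

theorem Complex.continuous_polarCoord_symm : Continuous Complex.polarCoord.symm :=
  Complex.equivRealProdCLM.symm.continuous.comp _root_.continuous_polarCoord_symm

theorem Complex.polarCoord_symm_mem_ball {s R : ℝ} (θ : ℝ) (hs : s ∈ Ioo 0 R) :
    Complex.polarCoord.symm (s, θ) ∈ ball (0 : ℂ) R := by
  rw [mem_ball_zero_iff, Complex.norm_polarCoord_symm, abs_of_pos hs.1]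
  exact hs.2

theorem circleAverage_zero_eq_setIntegral_polarCoord (g : ℂ → ℝ) (s : ℝ) :
    circleAverage g 0 s =
      (2 * π)⁻¹ * ∫ θ in Ioo (-π) π, g (Complex.polarCoord.symm (s, θ)) := by
  have hcircle : ∀ θ, circleMap 0 s θ = Complex.polarCoord.symm (s, θ) := fun θ ↦ by
    simp [circleMap_zero, Complex.exp_mul_I]
  rw [circleAverage_eq_integral_add (-π), smul_eq_mul,
    intervalIntegral.integral_comp_add_right (fun θ ↦ g (circleMap 0 s θ)),
    intervalIntegral.integral_of_le (by linarith [pi_pos]), integral_Ioc_eq_integral_Ioo]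
  simp only [hcircle]
  ring_nf

theorem setLIntegral_ball_zero_eq_polarCoord (G : ℂ → ENNReal) (R : ℝ) :
    ∫⁻ z in ball 0 R, G z =
      ∫⁻ p in Ioo 0 R ×ˢ Ioo (-π) π, ENNReal.ofReal p.1 * G (Complex.polarCoord.symm p) := by
  have hpre : MeasurableSet (Complex.polarCoord.symm ⁻¹' ball (0 : ℂ) R) :=
    measurableSet_ball.preimage Complex.continuous_polarCoord_symm.measurable
  have htarget : Complex.polarCoord.symm ⁻¹' ball 0 R ∩ polarCoord.target =
      Ioo 0 R ×ˢ Ioo (-π) π := by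
    ext ⟨s, θ⟩
    simp only [polarCoord_target, mem_inter_iff, mem_prod, mem_Ioi, mem_preimage,
      mem_ball_zero_iff, Complex.norm_polarCoord_symm, mem_Ioo]
    constructor
    · rintro ⟨hsR, hs, hθ⟩
      exact ⟨⟨hs, by rwa [abs_of_pos hs] at hsR⟩, hθ⟩
    · rintro ⟨⟨hs, hsR⟩, hθ⟩
      exact ⟨by rwa [abs_of_pos hs], hs, hθ⟩
  rw [← lintegral_indicator measurableSet_ball, ← Complex.lintegral_comp_polarCoord_symm,
    ← htarget, ← setLIntegral_indicator hpre]
  congr 1 with p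
  by_cases hp : Complex.polarCoord.symm p ∈ ball 0 R
  · rw [indicator_of_mem hp, indicator_of_mem (mem_preimage.2 hp), smul_eq_mul]
  · rw [indicator_of_notMem hp, indicator_of_notMem (fun h ↦ hp (mem_preimage.1 h)), smul_zero]

theorem setLIntegral_Ioo_zero_ofReal_self {R : ℝ} (hR : 0 ≤ R) :
    ∫⁻ s in Ioo 0 R, ENNReal.ofReal s = ENNReal.ofReal (R ^ 2 / 2) := by
  have hint : IntegrableOn (fun s : ℝ ↦ s) (Ioo 0 R) :=
    continuous_id'.integrableOn_Icc.mono_set Ioo_subset_Icc_self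
  rw [← ofReal_integral_eq_lintegral_ofReal hint
      (ae_restrict_of_forall_mem measurableSet_Ioo fun s hs ↦ hs.1.le),
    ← integral_Ioc_eq_integral_Ioo, ← intervalIntegral.integral_of_le hR, integral_id]
  ring_nf

section SubMeanValue

variable {g : ℂ → ℝ} {R : ℝ}

theorem ofReal_two_pi_mul_le_setLIntegral_polarCoord (hg : ContinuousOn g (ball 0 R))
    (hg_nonneg : ∀ z ∈ ball (0 : ℂ) R, 0 ≤ g z) {s : ℝ} (hs : s ∈ Ioo 0 R)
    (hmean : g 0 ≤ circleAverage g 0 s) :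
    ENNReal.ofReal (2 * π * g 0) ≤
      ∫⁻ θ in Ioo (-π) π, ENNReal.ofReal (g (Complex.polarCoord.symm (s, θ))) := by
  have hcont : Continuous fun θ ↦ g (Complex.polarCoord.symm (s, θ)) :=
    hg.comp_continuous (Complex.continuous_polarCoord_symm.comp (.prodMk_right s))
      fun θ ↦ Complex.polarCoord_symm_mem_ball θ hs
  rw [circleAverage_zero_eq_setIntegral_polarCoord, le_inv_mul_iff₀ two_pi_pos] at hmean
  rw [← ofReal_integral_eq_lintegral_ofReal
    (hcont.integrableOn_Icc.mono_set Ioo_subset_Icc_self)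
    (ae_of_all _ fun θ ↦ hg_nonneg _ (Complex.polarCoord_symm_mem_ball θ hs))]
  exact ENNReal.ofReal_le_ofReal hmean

theorem ofReal_pi_mul_sq_mul_le_setLIntegral_ball (hR : 0 ≤ R)
    (hg : ContinuousOn g (ball 0 R)) (hg_nonneg : ∀ z ∈ ball (0 : ℂ) R, 0 ≤ g z)
    (hmean : ∀ s ∈ Ioo 0 R, g 0 ≤ circleAverage g 0 s) :
    ENNReal.ofReal (π * R ^ 2 * g 0) ≤ ∫⁻ z in ball 0 R, ENNReal.ofReal (g z) := by
  have hmeas : AEMeasurable (fun p : ℝ × ℝ ↦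
      ENNReal.ofReal p.1 * ENNReal.ofReal (g (Complex.polarCoord.symm p)))
      ((volume.prod volume).restrict (Ioo 0 R ×ˢ Ioo (-π) π)) :=
    measurable_fst.ennreal_ofReal.aemeasurable.mul
      ((hg.comp Complex.continuous_polarCoord_symm.continuousOn
        fun p hp ↦ Complex.polarCoord_symm_mem_ball p.2 hp.1).aemeasurable
        (measurableSet_Ioo.prod measurableSet_Ioo)).ennreal_ofReal
  calc ENNReal.ofReal (π * R ^ 2 * g 0)
      = ∫⁻ s in Ioo 0 R, ENNReal.ofReal s * ENNReal.ofReal (2 * π * g 0) := by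
        rw [lintegral_mul_const _ measurable_id'.ennreal_ofReal,
          setLIntegral_Ioo_zero_ofReal_self hR, ← ENNReal.ofReal_mul (by positivity)]
        ring_nf
    _ ≤ ∫⁻ s in Ioo 0 R, ENNReal.ofReal s *
          ∫⁻ θ in Ioo (-π) π, ENNReal.ofReal (g (Complex.polarCoord.symm (s, θ))) :=
        setLIntegral_mono' measurableSet_Ioo fun s hs ↦ by
          gcongr
          exact ofReal_two_pi_mul_le_setLIntegral_polarCoord hg hg_nonneg hs (hmean s hs)
    _ = ∫⁻ p in Ioo 0 R ×ˢ Ioo (-π) π,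
          ENNReal.ofReal p.1 * ENNReal.ofReal (g (Complex.polarCoord.symm p)) := by
        rw [Measure.volume_eq_prod, setLIntegral_prod _ hmeas]
        simp only [lintegral_const_mul' _ _ ENNReal.ofReal_ne_top]
    _ = ∫⁻ z in ball 0 R, ENNReal.ofReal (g z) :=
        (setLIntegral_ball_zero_eq_polarCoord (fun z ↦ ENNReal.ofReal (g z)) R).symm

end SubMeanValue

theorem DifferentiableOn.ofReal_pi_mul_sq_mul_norm_sq_le_setLIntegral_ball {f : ℂ → ℂ} {R : ℝ}
    (hf : DifferentiableOn ℂ f (ball 0 R)) (hR : 0 ≤ R) :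
    ENNReal.ofReal (π * R ^ 2 * ‖f 0‖ ^ 2) ≤ ∫⁻ z in ball 0 R, ENNReal.ofReal (‖f z‖ ^ 2) :=
  ofReal_pi_mul_sq_mul_le_setLIntegral_ball hR (hf.continuousOn.norm.pow 2)
    (fun _ _ ↦ by positivity) fun s hs ↦ norm_sq_le_circleAverage_norm_sq <|
      hf.diffContOnCl_ball <| closedBall_subset_ball <| by rw [abs_of_pos hs.1]; exact hs.2

theorem setLIntegral_prod_eq_lintegral_setLIntegral_preimage_mk {α β : Type*}
    [MeasurableSpace α] [MeasurableSpace β] {μ : Measure α} {ν : Measure β} [SFinite ν]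
    {S : Set (α × β)} (hS : MeasurableSet S) {G : α × β → ENNReal}
    (hG : AEMeasurable G ((μ.prod ν).restrict S)) :
    ∫⁻ p in S, G p ∂μ.prod ν = ∫⁻ x, ∫⁻ y in Prod.mk x ⁻¹' S, G (x, y) ∂ν ∂μ := by
  rw [← lintegral_indicator hS, lintegral_prod _ ((aemeasurable_indicator_iff hS).2 hG)]
  congr 1 with x
  rw [← lintegral_indicator (measurable_prodMk_left hS)]
  rfl

theorem exp_neg_half_sq (t : ℝ) : exp (-t / 2) ^ 2 = exp (-t) := by
  rw [← exp_nat_mul]; ring_nf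

def hartogsDomain (Ω : Set ℂ) (φ : ℂ → ℝ) : Set (ℂ × ℂ) :=
  {p | p.1 ∈ Ω ∧ ‖p.2‖ ^ 2 < exp (-φ p.1)}

theorem isOpen_hartogsDomain {Ω : Set ℂ} (hΩ : IsOpen Ω) {φ : ℂ → ℝ}
    (hφ : UpperSemicontinuousOn φ Ω) : IsOpen (hartogsDomain Ω φ) := by
  rw [isOpen_iff_mem_nhds]
  rintro ⟨z, w⟩ ⟨hz, hw⟩
  -- A level `a` slightly above `φ z` separates: `φ < a` near `z`, and `‖·‖² < e^{-a}` near `w`.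
  obtain ⟨a, hza, hwa⟩ : ∃ a, φ z < a ∧ ‖w‖ ^ 2 < exp (-a) := by
    have hexp : ∀ᶠ a in 𝓝 (φ z), ‖w‖ ^ 2 < exp (-a) :=
      (continuous_exp.comp continuous_neg).continuousAt.eventually_const_lt hw
    exact (eventually_mem_nhdsWithin.and (nhdsWithin_le_nhds hexp)).exists (f := 𝓝[>] (φ z))
  have hU : ∀ᶠ z' in 𝓝 z, z' ∈ Ω ∧ φ z' < a :=
    (hΩ.eventually_mem hz).and (by simpa only [hΩ.nhdsWithin_eq hz] using hφ z hz a hza)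
  have hV : ∀ᶠ w' in 𝓝 w, ‖w'‖ ^ 2 < exp (-a) :=
    (continuous_norm.pow 2).continuousAt.eventually_lt continuousAt_const hwa
  filter_upwards [hU.prod_nhds hV] with ⟨z', w'⟩ ⟨⟨hz', hφz'⟩, hw'⟩
  exact ⟨hz', hw'.trans (exp_lt_exp.2 (neg_lt_neg hφz'))⟩

theorem preimage_mk_hartogsDomain {Ω : Set ℂ} {φ : ℂ → ℝ} {z : ℂ} (hz : z ∈ Ω) :
    Prod.mk z ⁻¹' hartogsDomain Ω φ = ball 0 (exp (-φ z / 2)) := by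
  ext w
  rw [mem_preimage, hartogsDomain, mem_ofPred_eq, mem_ball_zero_iff, ← exp_neg_half_sq,
    pow_lt_pow_iff_left₀ (norm_nonneg w) (exp_pos _).le two_ne_zero]
  exact and_iff_right hz

theorem ofReal_pi_mul_le_setLIntegral_preimage_mk_hartogsDomain {Ω : Set ℂ} {φ : ℂ → ℝ}
    {F : ℂ × ℂ → ℂ} (hF : ∀ p ∈ hartogsDomain Ω φ, DifferentiableAt ℂ F p) {z : ℂ}
    (hz : z ∈ Ω) :
    ENNReal.ofReal π * ENNReal.ofReal (‖F (z, 0)‖ ^ 2 * exp (-φ z)) ≤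
      ∫⁻ w in Prod.mk z ⁻¹' hartogsDomain Ω φ, ENNReal.ofReal (‖F (z, w)‖ ^ 2) := by
  have hFz : DifferentiableOn ℂ (fun w ↦ F (z, w)) (Prod.mk z ⁻¹' hartogsDomain Ω φ) :=
    fun w hw ↦ ((hF _ hw).comp w ((differentiableAt_const z).prodMk differentiableAt_id))
      |>.differentiableWithinAt
  rw [preimage_mk_hartogsDomain hz] at hFz ⊢
  rw [← ENNReal.ofReal_mul pi_pos.le, ← exp_neg_half_sq, ← mul_assoc, mul_right_comm]
  exact hFz.ofReal_pi_mul_sq_mul_norm_sq_le_setLIntegral_ball (exp_pos _).le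

/-- For an open `Ω ⊆ ℂ`, an upper semicontinuous `φ : Ω → ℝ`, the
Hartogs domain `Ω̃ = {(z,w) : z ∈ Ω, |w|² < e^{-φ(z)}}`, and `F` holomorphic on
`Ω̃`, one has `π ∫_Ω |F(z,0)|² e^{-φ(z)} dλ(z) ≤ ∫_{Ω̃} |F|² dλ` in `[0,∞]`. -/
theorem hartogs_fiber_mean_value
    (Ω : Set ℂ) (hΩ : IsOpen Ω)
    (φ : ℂ → ℝ) (hφ : UpperSemicontinuousOn φ Ω)
    (F : ℂ × ℂ → ℂ)
    (hF : ∀ p ∈ {p : ℂ × ℂ | p.1 ∈ Ω ∧ ‖p.2‖ ^ 2 < Real.exp (-φ p.1)},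
      DifferentiableAt ℂ F p) :
    ENNReal.ofReal π *
        ∫⁻ z in Ω, ENNReal.ofReal (‖F (z, 0)‖ ^ 2 * Real.exp (-φ z))
      ≤ ∫⁻ p in {p : ℂ × ℂ | p.1 ∈ Ω ∧ ‖p.2‖ ^ 2 < Real.exp (-φ p.1)},
          ENNReal.ofReal (‖F p‖ ^ 2) := by
  change _ ≤ ∫⁻ p in hartogsDomain Ω φ, ENNReal.ofReal (‖F p‖ ^ 2)
  have hS := isOpen_hartogsDomain hΩ hφ
  have hFS : ContinuousOn F (hartogsDomain Ω φ) := fun p hp ↦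
    (hF p hp).continuousAt.continuousWithinAt
  have hG : AEMeasurable (fun p ↦ ENNReal.ofReal (‖F p‖ ^ 2))
      ((volume.prod volume).restrict (hartogsDomain Ω φ)) := by
    rw [← Measure.volume_eq_prod]
    exact (ENNReal.continuous_ofReal.comp_continuousOn (hFS.norm.pow 2)).aemeasurable
      hS.measurableSet
  calc ENNReal.ofReal π * ∫⁻ z in Ω, ENNReal.ofReal (‖F (z, 0)‖ ^ 2 * exp (-φ z))
      = ∫⁻ z in Ω, ENNReal.ofReal π * ENNReal.ofReal (‖F (z, 0)‖ ^ 2 * exp (-φ z)) :=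
        (lintegral_const_mul' _ _ ENNReal.ofReal_ne_top).symm
    _ ≤ ∫⁻ z in Ω, ∫⁻ w in Prod.mk z ⁻¹' hartogsDomain Ω φ, ENNReal.ofReal (‖F (z, w)‖ ^ 2) :=
        setLIntegral_mono' hΩ.measurableSet fun z hz ↦
          ofReal_pi_mul_le_setLIntegral_preimage_mk_hartogsDomain hF hz
    _ ≤ ∫⁻ z, ∫⁻ w in Prod.mk z ⁻¹' hartogsDomain Ω φ, ENNReal.ofReal (‖F (z, w)‖ ^ 2) :=
        setLIntegral_le_lintegral _ _
    _ = ∫⁻ p in hartogsDomain Ω φ, ENNReal.ofReal (‖F p‖ ^ 2) := by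
        rw [Measure.volume_eq_prod,
          setLIntegral_prod_eq_lintegral_setLIntegral_preimage_mk hS.measurableSet hG]
end
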